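/- (Action of the complement involution on γ-Schur functions) Let γ be a composition of n and α ≤ γ. Let ζ be the composition with D(ζ) = (D(γ^c) \ D(α)) ∪ D(γ). Then the algebra involution ω^c of Sym_nc defined by ω^c(R_β) = R_{β^c} satisfies ω^c(R_α^{(γ)}(t)) = t^{n(γ)} R_ζ^{(γ)}(1/t). -/

import Mathlib

open Finset

noncomputable section

/-- The field `ℚ(t)` (which contains `1/t`). -/
abbrev Ft : Type := RatFunc ℚ

/-- The variable `t`. -/
def tt : Ft := RatFunc.X

/-- Descent sets of compositions of `n` are subsets of `{1,...,n-1}`. -/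
def ground (n : ℕ) : Finset ℕ := Finset.Icc 1 (n - 1)

/-- `c(α,β) = Σ_{i ∈ D(α) ∩ D(β)} i`. -/
def cstat (A B : Finset ℕ) : ℕ := ∑ i ∈ A ∩ B, i

/-- The degree-`n` component of `Sym_nc` as the free module with basis the ribbon
Schur functions `R_β`, indexed by descent sets. -/
def Rib : Finset ℕ → (Finset ℕ →₀ Ft) := fun B => Finsupp.single B 1

/-- `γ`-ribbon Schur functions with parameter `u`:
`R_α^{(γ)}(u) = Σ_{β ≥ α, D(α)\D(β) ⊆ D(γ)} u^{c(α,β^c)} R_β`. -/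
def gSchur (n : ℕ) (G A : Finset ℕ) (u : Ft) : Finset ℕ →₀ Ft :=
  ∑ B ∈ A.powerset.filter (fun B => A \ B ⊆ G), (u ^ cstat A (ground n \ B)) • Rib B

/-- The involution `ω^c` of (the degree-`n` component of) `Sym_nc`,
defined by `ω^c(R_β) = R_{β^c}`. -/
def omegaC (n : ℕ) : (Finset ℕ →₀ Ft) →ₗ[Ft] (Finset ℕ →₀ Ft) :=
  Finsupp.lmapDomain Ft Ft (fun B => ground n \ B)

/-! Complementation `B ↦ D \ B` in `D = {1, …, n-1}` maps the index set of `R_α^{(γ)}`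
into that of `R_ζ^{(γ)}`, where `D(ζ) = (D \ D(α)) ∪ D(γ)`. Since `A ↦ (D \ A) ∪ D(γ)` is an
involution on the sets between `D(γ)` and `D`, the same map goes back, so it is a bijection.
Along it the exponents split `n(γ)`: `c(α, β^c)` sums over `D(γ) \ D(β)` and `c(ζ, β)` over
`D(γ) ∩ D(β)`. -/

namespace Finset

variable {α : Type*} [DecidableEq α]

def ribbonIndex (G A : Finset α) : Finset (Finset α) :=
  A.powerset.filter fun B => A \ B ⊆ G

theorem mem_ribbonIndex {G A B : Finset α} :
    B ∈ ribbonIndex G A ↔ B ⊆ A ∧ A \ B ⊆ G := by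
  simp [ribbonIndex]

theorem sdiff_union_sdiff_union_of_subset {g G A : Finset α} (hA : A ⊆ g) (hGA : G ⊆ A) :
    (g \ ((g \ A) ∪ G)) ∪ G = A := by
  ext x
  have := @hA x
  have := @hGA x
  simp only [mem_union, mem_sdiff]
  tauto

theorem sdiff_mem_ribbonIndex_sdiff_union {g G A B : Finset α} (hB : B ∈ ribbonIndex G A) :
    g \ B ∈ ribbonIndex G ((g \ A) ∪ G) := by
  obtain ⟨hBA, hABG⟩ := mem_ribbonIndex.1 hB
  refine mem_ribbonIndex.2 ⟨fun x hx => ?_, fun x hx => ?_⟩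
  · have := @hABG x
    simp only [mem_union, mem_sdiff] at hx this ⊢
    tauto
  · have := @hBA x
    simp only [mem_union, mem_sdiff] at hx ⊢
    tauto

theorem sum_inter_sdiff_add_sum_sdiff_union_inter {M : Type*} [AddCommMonoid M] (f : α → M)
    {g G A B : Finset α} (hA : A ⊆ g) (hGA : G ⊆ A) (hB : B ∈ ribbonIndex G A) :
    ∑ i ∈ A ∩ (g \ B), f i + ∑ i ∈ ((g \ A) ∪ G) ∩ B, f i = ∑ i ∈ G, f i := by
  obtain ⟨hBA, hABG⟩ := mem_ribbonIndex.1 hB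
  have h₁ : A ∩ (g \ B) = G \ B := by
    ext x; have := @hA x; have := @hGA x; have := @hABG x
    simp only [mem_inter, mem_sdiff] at *; tauto
  have h₂ : ((g \ A) ∪ G) ∩ B = G ∩ B := by
    ext x; have := @hBA x
    simp only [mem_inter, mem_union, mem_sdiff] at *; tauto
  rw [h₁, h₂, add_comm, sum_inter_add_sum_sdiff]

theorem sum_ribbonIndex_sdiff_union {M : Type*} [AddCommMonoid M] (f : Finset α → M)
    {g G A : Finset α} (hA : A ⊆ g) (hGA : G ⊆ A) :
    ∑ C ∈ ribbonIndex G ((g \ A) ∪ G), f C = ∑ B ∈ ribbonIndex G A, f (g \ B) := by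
  have sdiff_sdiff_of_mem {A' C : Finset α} (hA' : A' ⊆ g) (hC : C ∈ ribbonIndex G A') :
      g \ (g \ C) = C :=
    sdiff_sdiff_eq_self ((mem_ribbonIndex.1 hC).1.trans hA')
  have hZ : (g \ A) ∪ G ⊆ g := union_subset sdiff_subset (hGA.trans hA)
  refine sum_nbij' (g \ ·) (g \ ·) (fun C hC => ?_)
    (fun _ hB => sdiff_mem_ribbonIndex_sdiff_union hB)
    (fun _ hC => sdiff_sdiff_of_mem hZ hC) (fun _ hB => sdiff_sdiff_of_mem hA hB)
    (fun _ hC => by rw [sdiff_sdiff_of_mem hZ hC])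
  simpa only [sdiff_union_sdiff_union_of_subset hA hGA] using
    sdiff_mem_ribbonIndex_sdiff_union (g := g) hC

end Finset

theorem gSchur_eq_sum_ribbonIndex (n : ℕ) (G A : Finset ℕ) (u : Ft) :
    gSchur n G A u = ∑ B ∈ ribbonIndex G A, u ^ cstat A (ground n \ B) • Rib B :=
  rfl

theorem omegaC_rib (n : ℕ) (B : Finset ℕ) : omegaC n (Rib B) = Rib (ground n \ B) :=
  Finsupp.mapDomain_single

/-- For `α ≤ γ` compositions of `n` and `ζ` with `D(ζ) = (D(γ^c)\D(α)) ∪ D(γ)`: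
`ω^c(R_α^{(γ)}(t)) = t^{n(γ)} R_ζ^{(γ)}(1/t)`. -/
theorem stmt11 (n : ℕ) (G A : Finset ℕ)
    (hA : A ⊆ ground n) (hGA : G ⊆ A) :
    omegaC n (gSchur n G A tt)
      = (tt ^ (∑ i ∈ G, i)) • gSchur n G (((ground n \ G) \ A) ∪ G) tt⁻¹ := by
  have hZ : ((ground n \ G) \ A) ∪ G = (ground n \ A) ∪ G := by
    ext x; have := @hGA x
    simp only [mem_union, mem_sdiff]; tauto
  rw [hZ, gSchur_eq_sum_ribbonIndex, gSchur_eq_sum_ribbonIndex, map_sum, smul_sum,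
    sum_ribbonIndex_sdiff_union _ hA hGA]
  refine sum_congr rfl fun B hB => ?_
  have hB_sub : B ⊆ ground n := (mem_ribbonIndex.1 hB).1.trans hA
  rw [map_smul, omegaC_rib, Finset.sdiff_sdiff_eq_self hB_sub, smul_smul, cstat, cstat,
    ← sum_inter_sdiff_add_sum_sdiff_union_inter (fun i => i) hA hGA hB, pow_add, inv_pow,
    mul_inv_cancel_right₀ (pow_ne_zero _ RatFunc.X_ne_zero)]
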